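/- Let G be a bipartite graph with vertex classes U, V such that all vertices in U have the same degree and all vertices in V have the same degree, and let A be its biadjacency matrix. Then σ₂(A) ≥ max over nonempty S ⊆ U, R ⊆ V of (1/√(|S|·|R|))·|e(S,R) − (e(U,V)/(|U|·|V|))·|S|·|R||, where e(X,Y) is the number of edges with one endpoint in X and the other in Y. -/

import Mathlib

open Matrix Finset

/-- `f` rearranged in decreasing order. -/
noncomputable def sortDesc {N : ℕ} (f : Fin N → ℝ) : Fin N → ℝ :=
  fun i => f (Tuple.sort f i.rev)

/-- The singular values `σ₁(A) ≥ σ₂(A) ≥ ⋯` of `A` (0-indexed). -/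
noncomputable def singVal {m n : ℕ} (A : Matrix (Fin m) (Fin n) ℝ) (i : ℕ) : ℝ :=
  if h : i < n then
    Real.sqrt (sortDesc (show (Aᵀ * A).IsHermitian by
      simpa [Matrix.conjTranspose_eq_transpose_of_trivial] using
        Matrix.isHermitian_conjTranspose_mul_self A).eigenvalues ⟨i, h⟩)
  else 0

/-!
Let `y = 𝟙_R - (|R|/n) 𝟙`. Since all rows of `A` have the same sum,
`∑_{i ∈ S} (A y)_i = e(S,R) - e(U,V)|S||R|/(|U||V|)`, so by Cauchy–Schwarz the quantity
to bound is at most `√|S| ‖A y‖ / √(|S||R|)`. Since also all columns have the same sum,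
`𝟙` is an eigenvector of `AᵀA` whose eigenvalue is the product `d_U d_V` of the degrees,
and by the Schur test (`A ≥ 0`) no eigenvalue is larger. As `y ⊥ 𝟙`, the Rayleigh quotient
of `y` is then at most the second eigenvalue `σ₂(A)²`, so
`‖A y‖² ≤ σ₂(A)² ‖y‖² ≤ σ₂(A)² |R|`.
-/

theorem eq_sum_div_card_of_forall_eq {ι : Type*} [Fintype ι] {f : ι → ℝ}
    (hf : ∀ i i', f i = f i') (i : ι) : f i = (∑ i', f i') / Fintype.card ι := by
  have : Nonempty ι := ⟨i⟩
  have : (Fintype.card ι : ℝ) ≠ 0 := Nat.cast_ne_zero.2 Fintype.card_ne_zero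
  rw [sum_congr rfl fun i' _ => hf i' i, sum_const, card_univ, nsmul_eq_mul,
    mul_div_cancel_left₀ _ this]

section SortDesc

variable {N : ℕ} (f : Fin N → ℝ)

lemma sortDesc_antitone : Antitone (sortDesc f) :=
  fun _ _ hij => Tuple.monotone_sort f (Fin.rev_le_rev.2 hij)

lemma sortDesc_rev_symm_sort (k : Fin N) : sortDesc f ((Tuple.sort f).symm k).rev = f k := by
  simp [sortDesc]

lemma eq_of_sortDesc_one_lt (hN : 1 < N) {k k' : Fin N} (hk : sortDesc f ⟨1, hN⟩ < f k)
    (hk' : sortDesc f ⟨1, hN⟩ < f k') : k = k' := by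
  have rank_eq_zero : ∀ k, sortDesc f ⟨1, hN⟩ < f k → ((Tuple.sort f).symm k).rev.val = 0 := by
    intro k hk
    by_contra hne
    have hle : (⟨1, hN⟩ : Fin N) ≤ ((Tuple.sort f).symm k).rev := by
      rw [Fin.le_iff_val_le_val]
      exact Nat.one_le_iff_ne_zero.2 hne
    have := sortDesc_antitone f hle
    rw [sortDesc_rev_symm_sort] at this
    linarith
  have h := Fin.ext ((rank_eq_zero k hk).trans (rank_eq_zero k' hk').symm)
  simpa using h

end SortDesc

/-- Read `lam` as the eigenvalues of a symmetric matrix, and `d`, `c` as the coordinates, in an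
orthonormal eigenbasis, of an eigenvector for the top eigenvalue `μ` and of a vector orthogonal to
it. An eigenvalue above `s` is the only one, so the eigenvector lies on its axis and `c` vanishes
there. -/
theorem sum_mul_sq_le_mul_sum_sq_of_orthogonal {ι : Type*} [Fintype ι] {lam c d : ι → ℝ}
    {s μ : ℝ} (hs : ∀ k k', s < lam k → s < lam k' → k = k') (hμ : ∀ k, lam k ≤ μ)
    (hd : ∀ k, lam k ≠ μ → d k = 0) (hd0 : d ≠ 0) (horth : ∑ k, d k * c k = 0) :
    ∑ k, lam k * c k ^ 2 ≤ s * ∑ k, c k ^ 2 := by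
  rw [mul_sum]
  refine sum_le_sum fun k _ => ?_
  rcases le_or_gt (lam k) s with hks | hks
  · exact mul_le_mul_of_nonneg_right hks (sq_nonneg _)
  have hdj : ∀ j, j ≠ k → d j = 0 := fun j hj =>
    hd j fun h => hj (hs j k (by linarith [hμ k]) hks)
  have hdk : d k ≠ 0 := fun h => hd0 <| funext fun j => by
    rcases eq_or_ne j k with rfl | hj
    exacts [h, hdj j hj]
  have hck : c k = 0 := by
    rw [sum_eq_single k (fun j _ hj => by rw [hdj j hj, zero_mul]) (by simp)] at horth
    exact (mul_eq_zero.1 horth).resolve_left hdk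
  simp [hck]

namespace Matrix.IsHermitian

variable {n : Type*} [Fintype n] [DecidableEq n] {M : Matrix n n ℝ} (hM : M.IsHermitian)

lemma dotProduct_eq_sum_eigenvectorBasis (z w : n → ℝ) :
    z ⬝ᵥ w = ∑ k, (z ⬝ᵥ ⇑(hM.eigenvectorBasis k)) * (w ⬝ᵥ ⇑(hM.eigenvectorBasis k)) := by
  have h := hM.eigenvectorBasis.sum_inner_mul_inner (WithLp.toLp 2 z) (WithLp.toLp 2 w)
  simp only [EuclideanSpace.inner_eq_star_dotProduct, star_trivial] at h
  simpa [dotProduct_comm] using h.symm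

lemma eigenvectorBasis_dotProduct_self (k : n) :
    ⇑(hM.eigenvectorBasis k) ⬝ᵥ ⇑(hM.eigenvectorBasis k) = 1 := by
  have h := real_inner_self_eq_norm_sq (hM.eigenvectorBasis k)
  rw [hM.eigenvectorBasis.orthonormal.1 k, one_pow,
    EuclideanSpace.inner_eq_star_dotProduct] at h
  simpa using h

lemma eigenvectorBasis_dotProduct_mulVec (k : n) (w : n → ℝ) :
    (M *ᵥ w) ⬝ᵥ ⇑(hM.eigenvectorBasis k) =
      hM.eigenvalues k * (w ⬝ᵥ ⇑(hM.eigenvectorBasis k)) := by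
  rw [dotProduct_comm, dotProduct_mulVec, ← mulVec_transpose, isHermitian_iff_isSymm.1 hM,
    mulVec_eigenvectorBasis, smul_dotProduct, smul_eq_mul, dotProduct_comm]

theorem dotProduct_mulVec_le_of_orthogonal {s μ : ℝ}
    (hs : ∀ k k', s < hM.eigenvalues k → s < hM.eigenvalues k' → k = k')
    (hμ : ∀ k, hM.eigenvalues k ≤ μ) {v y : n → ℝ} (hv : v ≠ 0) (hev : M *ᵥ v = μ • v)
    (horth : v ⬝ᵥ y = 0) :
    y ⬝ᵥ (M *ᵥ y) ≤ s * (y ⬝ᵥ y) := by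
  set u := fun k => ⇑(hM.eigenvectorBasis k)
  have hd : ∀ k, hM.eigenvalues k ≠ μ → v ⬝ᵥ u k = 0 := by
    intro k hk
    have h := hM.eigenvectorBasis_dotProduct_mulVec k v
    rw [hev, smul_dotProduct, smul_eq_mul] at h
    exact (mul_eq_mul_right_iff.1 h.symm).resolve_left hk
  have hd0 : (fun k => v ⬝ᵥ u k) ≠ 0 := fun h =>
    hv <| dotProduct_self_eq_zero.1 <| by
      rw [hM.dotProduct_eq_sum_eigenvectorBasis]; simp [u, congrFun h]
  rw [hM.dotProduct_eq_sum_eigenvectorBasis] at horth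
  have hcoord := sum_mul_sq_le_mul_sum_sq_of_orthogonal hs hμ hd hd0 horth
  rw [hM.dotProduct_eq_sum_eigenvectorBasis, hM.dotProduct_eq_sum_eigenvectorBasis y y]
  simpa [eigenvectorBasis_dotProduct_mulVec, sq, mul_assoc, mul_left_comm] using hcoord

end Matrix.IsHermitian

theorem mulVec_one_of_forall_sum_eq {m n : Type*} [Fintype n] {A : Matrix m n ℝ} {a : ℝ}
    (hrow : ∀ i, ∑ j, A i j = a) : A *ᵥ 1 = a • 1 := by
  ext i
  simp [mulVec, dotProduct_one, hrow]

section Biregular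

variable {m n : Type*} [Fintype m] [Fintype n] {A : Matrix m n ℝ} {a b : ℝ}

theorem mulVec_dotProduct_self_le (hA : ∀ i j, 0 ≤ A i j) (hrow : ∀ i, ∑ j, A i j = a)
    (hcol : ∀ j, ∑ i, A i j = b) (z : n → ℝ) :
    (A *ᵥ z) ⬝ᵥ (A *ᵥ z) ≤ a * b * (z ⬝ᵥ z) := by
  have hpt : ∀ i, (A *ᵥ z) i ^ 2 ≤ a * ∑ j, A i j * z j ^ 2 := fun i => by
    rw [← hrow i]
    exact sum_sq_le_sum_mul_sum_of_sq_le_mul _ (fun j _ => hA i j)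
      (fun j _ => mul_nonneg (hA i j) (sq_nonneg _)) (fun j _ => le_of_eq (by ring))
  calc (A *ᵥ z) ⬝ᵥ (A *ᵥ z) = ∑ i, (A *ᵥ z) i ^ 2 := by simp [dotProduct, sq]
    _ ≤ ∑ i, a * ∑ j, A i j * z j ^ 2 := sum_le_sum fun i _ => hpt i
    _ = a * ∑ j, (∑ i, A i j) * z j ^ 2 := by rw [← mul_sum, sum_comm]; simp [sum_mul]
    _ = a * b * (z ⬝ᵥ z) := by simp [hcol, ← mul_sum, dotProduct, sq, mul_assoc]

theorem transpose_mul_self_mulVec_one (hrow : ∀ i, ∑ j, A i j = a)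
    (hcol : ∀ j, ∑ i, A i j = b) : (Aᵀ * A) *ᵥ 1 = (a * b) • 1 := by
  rw [← mulVec_mulVec, mulVec_one_of_forall_sum_eq hrow, mulVec_smul,
    mulVec_one_of_forall_sum_eq (A := Aᵀ) hcol, smul_smul, mul_comm]

theorem eigenvalues_transpose_mul_self_le [DecidableEq n] (hM : (Aᵀ * A).IsHermitian)
    (hA : ∀ i j, 0 ≤ A i j) (hrow : ∀ i, ∑ j, A i j = a) (hcol : ∀ j, ∑ i, A i j = b)
    (k : n) : hM.eigenvalues k ≤ a * b := by
  set u := ⇑(hM.eigenvectorBasis k)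
  calc hM.eigenvalues k = (A *ᵥ u) ⬝ᵥ (A *ᵥ u) := by
        rw [← mul_one (hM.eigenvalues k), ← hM.eigenvectorBasis_dotProduct_self k,
          ← hM.eigenvectorBasis_dotProduct_mulVec, ← mulVec_mulVec, dotProduct_comm,
          dotProduct_mulVec, vecMul_transpose]
    _ ≤ a * b * (u ⬝ᵥ u) := mulVec_dotProduct_self_le hA hrow hcol u
    _ = a * b := by rw [hM.eigenvectorBasis_dotProduct_self, mul_one]

end Biregular

section SingVal

variable {m n : ℕ} (A : Matrix (Fin m) (Fin n) ℝ)

lemma singVal_nonneg (i : ℕ) : 0 ≤ singVal A i := by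
  unfold singVal
  split_ifs
  exacts [Real.sqrt_nonneg _, le_rfl]

lemma eq_of_singVal_one_sq_lt (hM : (Aᵀ * A).IsHermitian) {k k' : Fin n}
    (hk : singVal A 1 ^ 2 < hM.eigenvalues k) (hk' : singVal A 1 ^ 2 < hM.eigenvalues k') :
    k = k' := by
  by_cases hn : 1 < n
  · have hσ : singVal A 1 ^ 2 = sortDesc hM.eigenvalues ⟨1, hn⟩ := by
      rw [singVal, dif_pos hn, Real.sq_sqrt]
      exact (posSemidef_conjTranspose_mul_self A).eigenvalues_nonneg _
    rw [hσ] at hk hk'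
    exact eq_of_sortDesc_one_lt _ hn hk hk'
  · exact Fin.ext (by omega)

variable {A} {a b : ℝ}

theorem mulVec_dotProduct_self_le_singVal_sq (hA : ∀ i j, 0 ≤ A i j)
    (hrow : ∀ i, ∑ j, A i j = a) (hcol : ∀ j, ∑ i, A i j = b) {y : Fin n → ℝ}
    (hy : ∑ j, y j = 0) :
    (A *ᵥ y) ⬝ᵥ (A *ᵥ y) ≤ singVal A 1 ^ 2 * (y ⬝ᵥ y) := by
  rcases isEmpty_or_nonempty (Fin n) with hn | hn
  · simp [Subsingleton.elim y 0]
  have hM : (Aᵀ * A).IsHermitian :=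
    isHermitian_iff_isSymm.2 (by simp [IsSymm, transpose_mul])
  rw [dotProduct_mulVec, ← mulVec_transpose, mulVec_mulVec, dotProduct_comm]
  exact hM.dotProduct_mulVec_le_of_orthogonal (fun _ _ => eq_of_singVal_one_sq_lt A hM)
    (eigenvalues_transpose_mul_self_le hM hA hrow hcol) one_ne_zero
    (transpose_mul_self_mulVec_one hrow hcol) (by rwa [one_dotProduct])

end SingVal

section CenteredIndicator

variable {κ : Type*} [Fintype κ] [DecidableEq κ] (R : Finset κ)

noncomputable def centeredIndicator (j : κ) : ℝ :=
  (if j ∈ R then 1 else 0) - #R / Fintype.card κ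

lemma sum_centeredIndicator : ∑ j, centeredIndicator R j = 0 := by
  rcases isEmpty_or_nonempty κ with hκ | hκ
  · simp
  have : (Fintype.card κ : ℝ) ≠ 0 := by positivity
  simp [centeredIndicator, sum_sub_distrib, mul_div_cancel₀ _ this]

lemma centeredIndicator_dotProduct_self_le :
    centeredIndicator R ⬝ᵥ centeredIndicator R ≤ #R := by
  set c : ℝ := #R / Fintype.card κ
  have hsplit : centeredIndicator R = (fun j => if j ∈ R then 1 else 0) - c • 1 := by
    ext j; simp [centeredIndicator, c]
  calc centeredIndicator R ⬝ᵥ centeredIndicator R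
      = centeredIndicator R ⬝ᵥ (fun j => if j ∈ R then 1 else 0)
          - c * (centeredIndicator R ⬝ᵥ 1) := by
        conv_lhs => arg 2; rw [hsplit]
        rw [dotProduct_sub, dotProduct_smul, smul_eq_mul]
    _ = #R * (1 - c) := by
        rw [dotProduct_one, sum_centeredIndicator, mul_zero, sub_zero]
        simp [dotProduct, centeredIndicator, c, mul_sub]
    _ ≤ #R := by
        have : 0 ≤ c := by positivity
        nlinarith

lemma mulVec_centeredIndicator {ι : Type*} [Fintype ι] {A : Matrix ι κ ℝ} {a : ℝ}
    (hrow : ∀ i, ∑ j, A i j = a) (i : ι) :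
    (A *ᵥ centeredIndicator R) i = ∑ j ∈ R, A i j - a * #R / Fintype.card κ := by
  simp [centeredIndicator, mulVec, dotProduct, mul_sub, sum_sub_distrib, ← sum_mul, hrow,
    mul_div_assoc]

end CenteredIndicator

theorem bipartite_expander_mixing_general {m n : ℕ} (A : Matrix (Fin m) (Fin n) ℝ)
    (hadj : ∀ i j, A i j = 0 ∨ A i j = 1)
    (hU : ∀ i i' : Fin m, ∑ j, A i j = ∑ j, A i' j)
    (hV : ∀ j j' : Fin n, ∑ i, A i j = ∑ i, A i j')
    (S : Finset (Fin m)) (R : Finset (Fin n)) :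
    (1 / Real.sqrt (S.card * R.card)) *
        |(∑ i ∈ S, ∑ j ∈ R, A i j) -
          (∑ i, ∑ j, A i j) / (m * n) * (S.card * R.card)| ≤ singVal A 1 := by
  have hA : ∀ i j, 0 ≤ A i j := fun i j => by rcases hadj i j with h | h <;> simp [h]
  have hrow : ∀ i, ∑ j, A i j = (∑ i, ∑ j, A i j) / m := fun i =>
    (eq_sum_div_card_of_forall_eq hU i).trans (by rw [Fintype.card_fin])
  have hcol : ∀ j, ∑ i, A i j = (∑ i, ∑ j, A i j) / n := fun j =>
    (eq_sum_div_card_of_forall_eq hV j).trans (by rw [Fintype.card_fin, sum_comm])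
  set y := centeredIndicator R
  have hQ : ∑ i ∈ S, (A *ᵥ y) i =
      (∑ i ∈ S, ∑ j ∈ R, A i j) - (∑ i, ∑ j, A i j) / (m * n) * (#S * #R) := by
    simp only [y, mulVec_centeredIndicator R hrow, sum_sub_distrib, sum_const, nsmul_eq_mul,
      Fintype.card_fin]
    ring
  have hQ_sq : (∑ i ∈ S, (A *ᵥ y) i) ^ 2 ≤ singVal A 1 ^ 2 * (#S * #R) :=
    calc (∑ i ∈ S, (A *ᵥ y) i) ^ 2 ≤ #S * ∑ i ∈ S, (A *ᵥ y) i ^ 2 := sq_sum_le_card_mul_sum_sq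
      _ ≤ #S * ((A *ᵥ y) ⬝ᵥ (A *ᵥ y)) := by
          refine mul_le_mul_of_nonneg_left ?_ (Nat.cast_nonneg _)
          simpa [dotProduct, sq] using
            sum_le_univ_sum_of_nonneg fun i => sq_nonneg ((A *ᵥ y) i)
      _ ≤ #S * (singVal A 1 ^ 2 * #R) := by
          refine mul_le_mul_of_nonneg_left ?_ (Nat.cast_nonneg _)
          have hy := sum_centeredIndicator R
          exact (mulVec_dotProduct_self_le_singVal_sq hA hrow hcol hy).trans
            (mul_le_mul_of_nonneg_left (centeredIndicator_dotProduct_self_le R) (sq_nonneg _))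
      _ = singVal A 1 ^ 2 * (#S * #R) := by ring
  rw [one_div_mul_eq_div, ← hQ]
  refine div_le_of_le_mul₀ (Real.sqrt_nonneg _) (singVal_nonneg A 1) ?_
  rw [← Real.sqrt_sq (singVal_nonneg A 1), ← Real.sqrt_mul (sq_nonneg _)]
  exact Real.abs_le_sqrt hQ_sq

/-- The bipartite Expander Mixing Lemma.  Let `G` be a bipartite graph with
vertex classes `U = [m]`, `V = [n]`, given by its `0`–`1` biadjacency matrix
`A` (so `e(S,R) = ∑_{i ∈ S, j ∈ R} A i j`).  Assume `G` is semiregular: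
all vertices of `U` have the same degree and all vertices of `V` have the same
degree.  Then for all nonempty `S ⊆ U`, `R ⊆ V`,
`σ₂(A) ≥ (1/√(|S||R|)) |e(S,R) − (e(U,V)/(|U||V|)) |S||R||`. -/
theorem bipartite_expander_mixing {m n : ℕ} (A : Matrix (Fin m) (Fin n) ℝ)
    (hadj : ∀ i j, A i j = 0 ∨ A i j = 1)
    (hU : ∀ i i' : Fin m, ∑ j, A i j = ∑ j, A i' j)
    (hV : ∀ j j' : Fin n, ∑ i, A i j = ∑ i, A i j')
    (S : Finset (Fin m)) (R : Finset (Fin n)) (hS : S.Nonempty) (hR : R.Nonempty) :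
    (1 / Real.sqrt (S.card * R.card)) *
        |(∑ i ∈ S, ∑ j ∈ R, A i j) -
          (∑ i, ∑ j, A i j) / (m * n) * (S.card * R.card)| ≤ singVal A 1 :=
  bipartite_expander_mixing_general A hadj hU hV S R
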